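/- Let X be a set, |·| : X → [0,∞) a function, m₀ > 0, d ≥ 1, β ≥ 2, and let p : (0,∞) × X → [0,∞), (t,x) ↦ p_t(x), be such that t ↦ p_t(x) is measurable for each x. Assume: (short time) there are C₀ > 0 and κ ∈ [0, ξ(1)) with p_t(x) ≤ C₀·e^{κ|x|}·exp(−t·ξ(|x|/t)) for all t > 0 and x ∈ X, where ξ(r) = r·arsinh(r) + 1 − √(1+r²); (long time) there are constants C₁, C₂, c₁, c₂ > 0 such that for all x ∈ X with |x| ≥ 1 and all t ≥ |x|, C₁·t^{−d/β}·exp(−c₁·(|x|^β/t)^{1/(β−1)}) ≤ p_t(x) ≤ C₂·t^{−d/β}·exp(−c₂·(|x|^β/t)^{1/(β−1)}). For α > 0 define k_α(x) = (1/Γ(α))·∫₀^∞ m₀·p_t(x)·t^{α−1} dt. Then for every x ∈ X with |x| ≥ 1: k_α(x) = ∞ for every α ≥ d/β; and for every compact set D ⊆ (0, d/β) there are constants 0 < c ≤ C such that c·|x|^{αβ−d} ≤ k_α(x) ≤ C·|x|^{αβ−d} for all α ∈ D and all x ∈ X with |x| ≥ 1 (in particular k_α(x) is finite for α ∈ (0,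 d/β)). -/

import Mathlib

open Filter MeasureTheory Topology
open scoped ENNReal NNReal

noncomputable section

namespace HG

variable {X : Type*}

open scoped Classical

/-- `f` has finite support (membership in `C_c(X)`). -/
def FinSupp (f : X → ℝ) : Prop := (Function.support f).Finite

/-- Membership in `𝓕`. -/
def MemF (b : X → X → ℝ) (f : X → ℝ) : Prop :=
  ∀ x : X, Summable fun y => b x y * |f y|

/-- The formal Laplacian `𝓛`. -/
def lap (b : X → X → ℝ) (c m : X → ℝ) (f : X → ℝ) (x : X) : ℝ :=
  (1 / m x) * ∑' y, b x y * (f x - f y) + (c x / m x) * f x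

/-- The energy form `𝓠`, valued in `ℝ≥0∞`. -/
def energy (b : X → X → ℝ) (c : X → ℝ) (f : X → ℝ) : ℝ≥0∞ :=
  (1 / 2) * ∑' x, ∑' y, ENNReal.ofReal (b x y * (f x - f y) ^ 2)
    + ∑' x, ENNReal.ofReal (c x * f x ^ 2)

/-- Membership in `𝓓`, the functions of finite energy. -/
def MemD (b : X → X → ℝ) (c : X → ℝ) (f : X → ℝ) : Prop := energy b c f < ⊤

/-- Membership in `𝓓₀`, the closure of `C_c(X)` w.r.t. `‖f‖_o = (𝓠(f)+f(o)²)^{1/2}`. -/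
def MemD0 (b : X → X → ℝ) (c : X → ℝ) (o : X) (f : X → ℝ) : Prop :=
  ∃ φ : ℕ → X → ℝ, (∀ n, FinSupp (φ n)) ∧
    Tendsto (fun n => energy b c (fun x => f x - φ n x)
      + ENNReal.ofReal ((f o - φ n o) ^ 2)) atTop (nhds 0)

/-- `(b,c)` is a connected graph over `(X,m)`. -/
structure IsGraph (b : X → X → ℝ) (c m : X → ℝ) : Prop where
  symm : ∀ x y, b x y = b y x
  nonneg : ∀ x y, 0 ≤ b x y
  loopless : ∀ x, b x x = 0
  deg_summable : ∀ x, Summable fun y => b x y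
  c_nonneg : ∀ x, 0 ≤ c x
  m_pos : ∀ x, 0 < m x
  connected : ∀ x y : X, ∃ (k : ℕ) (p : ℕ → X), p 0 = x ∧ p k = y ∧
    ∀ i < k, 0 < b (p i) (p (i + 1))

/-- `u` is superharmonic: `u ∈ 𝓕` and `𝓛u ≥ 0`. -/
def Superharmonic (b : X → X → ℝ) (c m : X → ℝ) (u : X → ℝ) : Prop :=
  MemF b u ∧ ∀ x, 0 ≤ lap b c m u x

/-- `u` is subharmonic: `u ∈ 𝓕` and `𝓛u ≤ 0`. -/
def Subharmonic (b : X → X → ℝ) (c m : X → ℝ) (u : X → ℝ) : Prop :=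
  MemF b u ∧ ∀ x, lap b c m u x ≤ 0

/-- The Green operator `Gk(x) = ∑_y G(x,y) k(y)`. -/
def Gop (G : X → X → ℝ) (k : X → ℝ) (x : X) : ℝ := ∑' y, G x y * k y

/-- Membership in `𝓖`, the domain of the Green operator. -/
def MemG (G : X → X → ℝ) (k : X → ℝ) : Prop :=
  ∀ x, Summable fun y => G x y * |k y|

/-- `u` is a potential: `u ∈ 𝓕`, `𝓛u ∈ 𝓖` and `u = G𝓛u`. -/
def IsPotential (b : X → X → ℝ) (c m : X → ℝ) (G : X → X → ℝ) (u : X → ℝ) : Prop :=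
  MemF b u ∧ MemG G (lap b c m u) ∧ u = Gop G (lap b c m u)

/-- Membership in `𝓖₂ = {k ∈ 𝓖 : ∑_x m(x)|k(x)| (G|k|)(x) < ∞}`. -/
def MemG2 (m : X → ℝ) (G : X → X → ℝ) (k : X → ℝ) : Prop :=
  MemG G k ∧ Summable fun x => m x * |k x| * Gop G (fun y => |k y|) x

/-- `G` is the Green function of the (transient) graph `(b,c)` over `(X,m)`:
for every `y`, `G(·,y)` is the unique function in `𝓓₀ ∩ 𝓕` with `𝓛 G(·,y) = 1_y`;
it is strictly positive and symmetric. -/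
structure IsGreen (b : X → X → ℝ) (c m : X → ℝ) (o : X) (G : X → X → ℝ) : Prop where
  pos : ∀ x y, 0 < G x y
  symm : ∀ x y, G x y = G y x
  memF : ∀ y, MemF b fun x => G x y
  memD0 : ∀ y, MemD0 b c o fun x => G x y
  lap_eq : ∀ y x, lap b c m (fun z => G z y) x = if x = y then 1 else 0
  unique : ∀ (y : X) (u : X → ℝ), MemF b u → MemD0 b c o u →
    (∀ x, lap b c m u x = if x = y then 1 else 0) → u = fun x => G x y

/-- `w(φ) = ∑_x m(x) w(x) φ(x)²`. -/
def wsum (m w φ : X → ℝ) : ℝ := ∑' x, m x * w x * φ x ^ 2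

/-- `w` is a Hardy type weight: `𝓠(φ) ≥ ∑_x m(x) w(x) φ(x)²` for all `φ ∈ C_c(X)`. -/
def IsHardyType (b : X → X → ℝ) (c m w : X → ℝ) : Prop :=
  ∀ φ : X → ℝ, FinSupp φ → ENNReal.ofReal (wsum m w φ) ≤ energy b c φ

/-- `w` is a Hardy weight: a non-negative Hardy type weight. -/
def IsHardy (b : X → X → ℝ) (c m w : X → ℝ) : Prop :=
  (∀ x, 0 ≤ w x) ∧ IsHardyType b c m w

/-- A Hardy weight is critical if the only Hardy weight above it is itself. -/
def IsCriticalHardy (b : X → X → ℝ) (c m w : X → ℝ) : Prop :=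
  IsHardy b c m w ∧ ∀ w', IsHardy b c m w' → (∀ x, w x ≤ w' x) → w' = w

/-- A Hardy type weight is critical if the only Hardy type weight above it is itself. -/
def IsCriticalHardyType (b : X → X → ℝ) (c m w : X → ℝ) : Prop :=
  IsHardyType b c m w ∧ ∀ w', IsHardyType b c m w' → (∀ x, w x ≤ w' x) → w' = w

/-- A ground state of `w`: a strictly positive `v ∈ 𝓕` with `𝓛v = wv`. -/
def IsGroundState (b : X → X → ℝ) (c m w v : X → ℝ) : Prop :=
  MemF b v ∧ (∀ x, 0 < v x) ∧ ∀ x, lap b c m v x = w x * v x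

/-- A ground state of `w` obtained as pointwise limit of a null sequence. -/
def IsGroundStateSeq (b : X → X → ℝ) (c m w v : X → ℝ) : Prop :=
  IsGroundState b c m w v ∧
  ∃ e : ℕ → X → ℝ, (∀ n, FinSupp (e n)) ∧
    Tendsto (fun n => (energy b c (e n)).toReal - wsum m w (e n)) atTop (nhds 0) ∧
    ∀ x, Tendsto (fun n => e n x) atTop (nhds (v x))

/-- Membership in `C₀(X)`, functions vanishing at infinity. -/
def MemC0 (f : X → ℝ) : Prop := ∀ ε : ℝ, 0 < ε → {x | ε ≤ |f x|}.Finite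

/-- The function `ξ(r) = r·arsinh(r) + 1 − √(1+r²)`. -/
def xi (r : ℝ) : ℝ := r * Real.arsinh r + 1 - Real.sqrt (1 + r ^ 2)

/-- The Riesz kernel `k_α(x) = (1/Γ(α)) ∫₀^∞ m₀ p_t(x) t^{α−1} dt`,
valued in `ℝ≥0∞`. -/
def rieszKernel {X : Type*} (m₀ : ℝ) (p : ℝ → X → ℝ) (α : ℝ) (x : X) : ℝ≥0∞ :=
  ENNReal.ofReal (1 / Real.Gamma α) *
    ∫⁻ t in Set.Ioi (0 : ℝ), ENNReal.ofReal (m₀ * p t x * t ^ (α - 1))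

/-!
Write `N = |x| ≥ 1` and `q = d/β`, so that `N^{β(α-q)} = N^{αβ-d}`.
For `t > N^β` the long time bounds squeeze `p_t(x)` between constant multiples of `t^{-q}`,
so `∫_{N^β}^∞ p_t(x) t^{α-1} dt` is infinite for `α ≥ q` and of order `N^{β(α-q)}/(q-α)` for
`α < q`. The rest of the integral is at most of the same order: on `(N, N^β]` the factor
`exp(-c₂ (N^β/t)^{1/(β-1)})` is at most a constant times `(t/N^β)^{1+q}`, and on `(0, N]`
convexity of `ξ` gives `t ξ(N/t) ≥ ξ(1) N`, so the short time bound decays like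
`e^{-(ξ(1)-κ) N} ≲ N^{-d}`. The resulting constants depend continuously on `α ∈ (0, q)`, so they
are bounded above and away from zero on the compact set `D`.
-/

open Real Set

lemma exists_exp_neg_mul_le_mul_rpow_neg (S : ℝ) {ε : ℝ} (hε : 0 < ε) :
    ∃ A, 0 < A ∧ ∀ y : ℝ, 1 ≤ y → exp (-(ε * y)) ≤ A * y ^ (-S) := by
  set M := ⌈S⌉₊
  refine ⟨M.factorial / ε ^ M, by positivity, fun y hy => ?_⟩
  have hy₀ : 0 < y := zero_lt_one.trans_le hy
  have hexp := pow_div_factorial_le_exp (x := ε * y) (by positivity) M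
  calc exp (-(ε * y)) = (exp (ε * y))⁻¹ := exp_neg _
    _ ≤ ((ε * y) ^ M / M.factorial)⁻¹ := inv_anti₀ (by positivity) hexp
    _ = M.factorial / ε ^ M * y ^ (-(M : ℝ)) := by
        rw [rpow_neg hy₀.le, rpow_natCast, mul_pow]
        field_simp
    _ ≤ M.factorial / ε ^ M * y ^ (-S) := by
        gcongr
        exact Nat.le_ceil S

lemma exists_exp_neg_mul_rpow_le_mul_rpow_neg (S : ℝ) {γ c : ℝ} (hγ : 0 < γ) (hc : 0 < c) :
    ∃ A, 0 < A ∧ ∀ u : ℝ, 1 ≤ u → exp (-(c * u ^ γ)) ≤ A * u ^ (-S) := by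
  obtain ⟨A, hA₀, hA⟩ := exists_exp_neg_mul_le_mul_rpow_neg (S / γ) hc
  refine ⟨A, hA₀, fun u hu => ?_⟩
  convert hA (u ^ γ) (one_le_rpow hu hγ.le) using 2
  rw [← rpow_mul (zero_le_one.trans hu), mul_neg, mul_div_cancel₀ _ hγ.ne']

lemma lintegral_Ioc_rpow_sub_one {b s : ℝ} (hb : 0 < b) (hs : 0 < s) :
    ∫⁻ t in Ioc 0 b, ENNReal.ofReal (t ^ (s - 1)) = ENNReal.ofReal (b ^ s / s) := by
  have hint : IntegrableOn (fun t : ℝ => t ^ (s - 1)) (Ioc 0 b) :=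
    (intervalIntegrable_iff_integrableOn_Ioc_of_le hb.le).1
      (intervalIntegral.intervalIntegrable_rpow' (by linarith))
  rw [← ofReal_integral_eq_lintegral_ofReal hint
    ((ae_restrict_mem measurableSet_Ioc).mono fun t ht => rpow_nonneg ht.1.le _),
    ← intervalIntegral.integral_of_le hb.le, integral_rpow (Or.inl (by linarith))]
  simp [zero_rpow hs.ne']

lemma lintegral_Ioi_rpow_sub_one {c s : ℝ} (hc : 0 < c) (hs : s < 0) :
    ∫⁻ t in Ioi c, ENNReal.ofReal (t ^ (s - 1)) = ENNReal.ofReal (c ^ s / -s) := by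
  rw [← ofReal_integral_eq_lintegral_ofReal (integrableOn_Ioi_rpow_of_lt (by linarith) hc)
    ((ae_restrict_mem measurableSet_Ioi).mono fun t ht => rpow_nonneg (hc.trans ht).le _),
    integral_Ioi_rpow_of_lt (by linarith) hc]
  simp [neg_div, div_neg]

lemma lintegral_Ioi_rpow_sub_one_eq_top {c s : ℝ} (hc : 0 < c) (hs : 0 ≤ s) :
    ∫⁻ t in Ioi c, ENNReal.ofReal (t ^ (s - 1)) = ⊤ := by
  by_contra h
  have hint : IntegrableOn (fun t : ℝ => t ^ (s - 1)) (Ioi c) :=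
    ⟨(measurable_id.pow_const _).aestronglyMeasurable,
      (hasFiniteIntegral_iff_ofReal ((ae_restrict_mem measurableSet_Ioi).mono
        fun t ht => rpow_nonneg (hc.trans ht).le _)).2 (lt_top_iff_ne_top.2 h)⟩
  have := (integrableOn_Ioi_rpow_iff hc).1 hint
  linarith

lemma setLIntegral_le_of_le_mul_rpow {s : Set ℝ} (hs : MeasurableSet s) (hs₀ : s ⊆ Ioi 0)
    {f : ℝ → ℝ} {K r α : ℝ} (hK : 0 ≤ K) (hf : ∀ t ∈ s, f t ≤ K * t ^ r) :
    ∫⁻ t in s, ENNReal.ofReal (f t * t ^ (α - 1)) ≤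
      ENNReal.ofReal K * ∫⁻ t in s, ENNReal.ofReal (t ^ (r + α - 1)) := by
  rw [← lintegral_const_mul' _ _ ENNReal.ofReal_ne_top]
  refine setLIntegral_mono' hs fun t ht => ?_
  have ht₀ : 0 < t := hs₀ ht
  rw [← ENNReal.ofReal_mul hK, add_sub_assoc, rpow_add ht₀, ← mul_assoc]
  gcongr
  exact hf t ht

lemma le_setLIntegral_of_mul_rpow_le {s : Set ℝ} (hs : MeasurableSet s) (hs₀ : s ⊆ Ioi 0)
    {f : ℝ → ℝ} {K r α : ℝ} (hK : 0 ≤ K) (hf : ∀ t ∈ s, K * t ^ r ≤ f t) :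
    ENNReal.ofReal K * ∫⁻ t in s, ENNReal.ofReal (t ^ (r + α - 1)) ≤
      ∫⁻ t in s, ENNReal.ofReal (f t * t ^ (α - 1)) := by
  rw [← lintegral_const_mul' _ _ ENNReal.ofReal_ne_top]
  refine setLIntegral_mono' hs fun t ht => ?_
  have ht₀ : 0 < t := hs₀ ht
  rw [← ENNReal.ofReal_mul hK, add_sub_assoc, rpow_add ht₀, ← mul_assoc]
  gcongr
  exact hf t ht

lemma lintegral_Ioi_le_of_three_regimes {f : ℝ → ℝ} {a b q α B W K : ℝ} (ha : 0 < a)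
    (hab : a ≤ b) (hα : 0 < α) (hαq : α < q) (hB : 0 ≤ B) (hW : 0 ≤ W) (hK : 0 ≤ K)
    (h₁ : ∀ t ∈ Ioc 0 a, f t ≤ B) (h₂ : ∀ t ∈ Ioc a b, f t ≤ W * t)
    (h₃ : ∀ t ∈ Ioi b, f t ≤ K * t ^ (-q)) :
    ∫⁻ t in Ioi 0, ENNReal.ofReal (f t * t ^ (α - 1)) ≤
      ENNReal.ofReal (B * (a ^ α / α) + W * (b ^ (1 + α) / (1 + α))
        + K * (b ^ (-q + α) / (q - α))) := by
  have hb : 0 < b := ha.trans_le hab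
  rw [← Ioc_union_Ioi_eq_Ioi hb.le, ← Ioc_union_Ioc_eq_Ioc ha.le hab,
    ENNReal.ofReal_add (by positivity) (by positivity), ENNReal.ofReal_add (by positivity)
      (by positivity), ENNReal.ofReal_mul hB, ENNReal.ofReal_mul hW, ENNReal.ofReal_mul hK]
  refine (lintegral_union_le _ _ _).trans
    (add_le_add ((lintegral_union_le _ _ _).trans (add_le_add ?_ ?_)) ?_)
  · calc _ ≤ ENNReal.ofReal B * ∫⁻ t in Ioc 0 a, ENNReal.ofReal (t ^ (0 + α - 1)) :=
          setLIntegral_le_of_le_mul_rpow measurableSet_Ioc (fun t ht => ht.1) hB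
            fun t ht => by simpa using h₁ t ht
      _ = _ := by rw [zero_add, lintegral_Ioc_rpow_sub_one ha hα]
  · calc _ ≤ ENNReal.ofReal W * ∫⁻ t in Ioc a b, ENNReal.ofReal (t ^ (1 + α - 1)) :=
          setLIntegral_le_of_le_mul_rpow measurableSet_Ioc (fun t ht => ha.trans ht.1) hW
            fun t ht => by simpa using h₂ t ht
      _ ≤ ENNReal.ofReal W * ∫⁻ t in Ioc 0 b, ENNReal.ofReal (t ^ (1 + α - 1)) := by
          gcongr
      _ = _ := by rw [lintegral_Ioc_rpow_sub_one hb (by linarith)]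
  · calc _ ≤ ENNReal.ofReal K * ∫⁻ t in Ioi b, ENNReal.ofReal (t ^ (-q + α - 1)) :=
          setLIntegral_le_of_le_mul_rpow measurableSet_Ioi (Ioi_subset_Ioi hb.le) hK h₃
      _ = _ := by rw [lintegral_Ioi_rpow_sub_one hb (by linarith), neg_add_eq_sub, neg_sub]

section SubGaussian

variable {P C c γ q b t : ℝ}

lemma mul_exp_neg_mul_rpow_neg_le_of_subgaussian_le (hC : 0 ≤ C) (hc : 0 ≤ c) (hγ : 0 ≤ γ)
    (hb : 0 ≤ b) (hbt : b ≤ t) (hP : C * t ^ (-q) * exp (-c * (b / t) ^ γ) ≤ P) :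
    C * exp (-c) * t ^ (-q) ≤ P := by
  have hu : (b / t) ^ γ ≤ 1 :=
    rpow_le_one (div_nonneg hb (hb.trans hbt)) (div_le_one_of_le₀ hbt (hb.trans hbt)) hγ
  refine le_trans ?_ hP
  rw [mul_right_comm]
  have : 0 ≤ t ^ (-q) := rpow_nonneg (hb.trans hbt) _
  gcongr
  nlinarith

lemma le_mul_rpow_neg_of_le_subgaussian (hC : 0 ≤ C) (hc : 0 ≤ c) (hb : 0 ≤ b) (ht : 0 ≤ t)
    (hP : P ≤ C * t ^ (-q) * exp (-c * (b / t) ^ γ)) : P ≤ C * t ^ (-q) := by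
  refine hP.trans (mul_le_of_le_one_right (by positivity) (exp_le_one_iff.2 ?_))
  have : 0 ≤ c * (b / t) ^ γ := by positivity
  linarith

lemma le_mul_rpow_neg_mul_of_le_subgaussian {A : ℝ} (hC : 0 ≤ C)
    (hA : ∀ u : ℝ, 1 ≤ u → exp (-(c * u ^ γ)) ≤ A * u ^ (-(1 + q))) (ht : 0 < t) (htb : t ≤ b)
    (hP : P ≤ C * t ^ (-q) * exp (-c * (b / t) ^ γ)) : P ≤ C * A * b ^ (-(1 + q)) * t := by
  have hb : 0 < b := ht.trans_le htb
  refine hP.trans ?_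
  calc C * t ^ (-q) * exp (-c * (b / t) ^ γ)
      ≤ C * t ^ (-q) * (A * (b / t) ^ (-(1 + q))) := by
        rw [neg_mul]
        gcongr
        exact hA _ ((one_le_div ht).2 htb)
    _ = C * A * b ^ (-(1 + q)) * t := by
        rw [div_rpow hb.le ht.le, rpow_neg ht.le, rpow_neg hb.le, rpow_neg ht.le, rpow_add ht,
          rpow_one]
        field_simp

end SubGaussian

lemma exists_pos_le_and_le_of_isCompact {Y : Type*} [TopologicalSpace Y] {D : Set Y}
    (hD : IsCompact D) {l u : Y → ℝ} (hl : ContinuousOn l D) (hu : ContinuousOn u D)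
    (hl₀ : ∀ y ∈ D, 0 < l y) : ∃ c C : ℝ, 0 < c ∧ c ≤ C ∧ ∀ y ∈ D, c ≤ l y ∧ u y ≤ C := by
  rcases D.eq_empty_or_nonempty with rfl | hne
  · exact ⟨1, 1, one_pos, le_rfl, by simp⟩
  obtain ⟨y₀, hy₀, hmin⟩ := hD.exists_isMinOn hne hl
  obtain ⟨C, hC⟩ := hD.bddAbove_image hu
  exact ⟨l y₀, max (l y₀) C, hl₀ y₀ hy₀, le_max_left _ _,
    fun y hy => ⟨hmin hy, (hC ⟨y, hy, rfl⟩).trans (le_max_right _ _)⟩⟩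

lemma hasDerivAt_xi (r : ℝ) : HasDerivAt xi (arsinh r) r := by
  have hsqrt : HasDerivAt (fun s : ℝ => √(1 + s ^ 2)) (r / √(1 + r ^ 2)) r := by
    convert ((hasDerivAt_pow 2 r).const_add 1).sqrt (by positivity) using 1
    field_simp
    ring
  refine ((((hasDerivAt_id' r).mul (hasDerivAt_arsinh r)).add_const 1).sub hsqrt).congr_deriv ?_
  field_simp
  ring

lemma xi_one_mul_le_xi {r : ℝ} (hr : 1 ≤ r) : xi 1 * r ≤ xi r := by
  have hmono : MonotoneOn (fun s => xi s - xi 1 * s) (Ici 1) := by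
    have hderiv : ∀ s, HasDerivAt (fun s => xi s - xi 1 * s) (arsinh s - xi 1) s := fun s =>
      (hasDerivAt_xi s).sub (by simpa using (hasDerivAt_id s).const_mul (xi 1))
    refine monotoneOn_of_hasDerivWithinAt_nonneg (convex_Ici 1)
      (fun s _ => (hderiv s).continuousAt.continuousWithinAt)
      (fun s _ => (hderiv s).hasDerivWithinAt) fun s hs => ?_
    rw [interior_Ici, mem_Ioi] at hs
    have : arsinh 1 ≤ arsinh s := arsinh_le_arsinh.2 hs.le
    have : (1 : ℝ) ≤ √(1 + 1 ^ 2) := by norm_num [one_lt_sqrt_two.le]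
    simp only [xi] at *
    linarith
  have := hmono self_mem_Ici (mem_Ici.2 hr) hr
  simp only at this
  linarith

lemma le_mul_exp_neg_of_le_mul_exp_xi {P C₀ κ N t : ℝ} (hC₀ : 0 ≤ C₀) (ht : 0 < t) (htN : t ≤ N)
    (hP : P ≤ C₀ * exp (κ * N) * exp (-t * xi (N / t))) :
    P ≤ C₀ * exp (-((xi 1 - κ) * N)) := by
  have hxi : xi 1 * N ≤ t * xi (N / t) := by
    calc xi 1 * N = t * (xi 1 * (N / t)) := by field_simp
      _ ≤ t * xi (N / t) := by gcongr; exact xi_one_mul_le_xi ((one_le_div ht).2 htN)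
  refine hP.trans ?_
  rw [mul_assoc, ← exp_add]
  gcongr
  linarith

lemma continuousOn_div_Gamma_mul {D : Set ℝ} {f : ℝ → ℝ} (hD : D ⊆ Ioi 0)
    (hf : ContinuousOn f D) (m₀ : ℝ) : ContinuousOn (fun α => m₀ / Gamma α * f α) D :=
  (continuousOn_const.div (differentiableOn_Gamma_Ioi.continuousOn.mono hD)
    fun _ hα => (Gamma_pos_of_pos (hD hα)).ne').mul hf

section RieszKernel

variable {p : ℝ → X → ℝ} {x : X} {m₀ α q b K : ℝ}

lemma rieszKernel_eq_top (hm₀ : 0 < m₀) (hK : 0 < K) (hb : 0 < b) (hq : 0 < q) (hqα : q ≤ α)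
    (h : ∀ t ∈ Ioi b, K * t ^ (-q) ≤ p t x) : rieszKernel m₀ p α x = ⊤ := by
  have hΓ : 0 < 1 / Gamma α := one_div_pos.2 (Gamma_pos_of_pos (hq.trans_le hqα))
  have hI : ∫⁻ t in Ioi 0, ENNReal.ofReal (m₀ * p t x * t ^ (α - 1)) = ⊤ := by
    refine eq_top_mono (lintegral_mono_set (Ioi_subset_Ioi hb.le)) (eq_top_iff.2 ?_)
    calc ⊤ = ENNReal.ofReal (m₀ * K) * ∫⁻ t in Ioi b, ENNReal.ofReal (t ^ (-q + α - 1)) := by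
          rw [lintegral_Ioi_rpow_sub_one_eq_top hb (by linarith),
            ENNReal.mul_top (ENNReal.ofReal_pos.2 (by positivity)).ne']
      _ ≤ _ := le_setLIntegral_of_mul_rpow_le measurableSet_Ioi (Ioi_subset_Ioi hb.le)
          (by positivity) fun t ht => by
            rw [mul_assoc]; exact mul_le_mul_of_nonneg_left (h t ht) hm₀.le
  rw [rieszKernel, hI, ENNReal.mul_top (ENNReal.ofReal_pos.2 hΓ).ne']

lemma le_rieszKernel (hm₀ : 0 ≤ m₀) (hK : 0 ≤ K) (hb : 0 < b) (hα : 0 < α) (hαq : α < q)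
    (h : ∀ t ∈ Ioi b, K * t ^ (-q) ≤ p t x) :
    ENNReal.ofReal (m₀ / Gamma α * (K / (q - α)) * b ^ (α - q)) ≤ rieszKernel m₀ p α x := by
  have hΓ : 0 < Gamma α := Gamma_pos_of_pos hα
  calc _ = ENNReal.ofReal (1 / Gamma α) *
        (ENNReal.ofReal (m₀ * K) * ENNReal.ofReal (b ^ (-q + α) / -(-q + α))) := by
        rw [← ENNReal.ofReal_mul (by positivity), ← ENNReal.ofReal_mul (by positivity),
          neg_add_eq_sub, neg_sub]
        congr 1
        ring
    _ ≤ _ := by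
        rw [rieszKernel, ← lintegral_Ioi_rpow_sub_one hb (by linarith)]
        gcongr
        refine (le_setLIntegral_of_mul_rpow_le measurableSet_Ioi (Ioi_subset_Ioi hb.le)
          (by positivity) fun t ht => ?_).trans (lintegral_mono_set (Ioi_subset_Ioi hb.le))
        rw [mul_assoc]
        exact mul_le_mul_of_nonneg_left (h t ht) hm₀

lemma rieszKernel_le {a B W : ℝ} (hm₀ : 0 ≤ m₀) (ha : 0 < a) (hab : a ≤ b) (hα : 0 < α)
    (hαq : α < q) (hB : 0 ≤ B) (hW : 0 ≤ W) (hK : 0 ≤ K)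
    (h₁ : ∀ t ∈ Ioc 0 a, p t x ≤ B * b ^ (-q))
    (h₂ : ∀ t ∈ Ioc a b, p t x ≤ W * b ^ (-(1 + q)) * t)
    (h₃ : ∀ t ∈ Ioi b, p t x ≤ K * t ^ (-q)) :
    rieszKernel m₀ p α x ≤
      ENNReal.ofReal (m₀ / Gamma α * (B / α + W / (1 + α) + K / (q - α)) * b ^ (α - q)) := by
  have hb : 0 < b := ha.trans_le hab
  have hΓ : 0 < Gamma α := Gamma_pos_of_pos hα
  have hI := lintegral_Ioi_le_of_three_regimes (f := fun t => m₀ * p t x) ha hab hα hαq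
    (by positivity : 0 ≤ m₀ * (B * b ^ (-q))) (by positivity : 0 ≤ m₀ * (W * b ^ (-(1 + q))))
    (by positivity : 0 ≤ m₀ * K)
    (fun t ht => mul_le_mul_of_nonneg_left (h₁ t ht) hm₀)
    (fun t ht => (mul_le_mul_of_nonneg_left (h₂ t ht) hm₀).trans_eq (by ring))
    (fun t ht => by rw [mul_assoc]; exact mul_le_mul_of_nonneg_left (h₃ t ht) hm₀)
  refine (mul_le_mul_right hI _).trans ?_
  rw [← ENNReal.ofReal_mul (by positivity)]
  gcongr ENNReal.ofReal ?_
  calc _ ≤ 1 / Gamma α * (m₀ * (B * b ^ (-q)) * (b ^ α / α)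
        + m₀ * (W * b ^ (-(1 + q))) * (b ^ (1 + α) / (1 + α))
        + m₀ * K * (b ^ (-q + α) / (q - α))) := by
        gcongr
    _ = _ := by
        rw [rpow_neg hb.le, rpow_neg hb.le, rpow_add hb, rpow_add hb, rpow_add hb, rpow_sub hb,
          rpow_neg hb.le, rpow_one]
        field_simp

end RieszKernel

theorem stmt19_general {X : Type*} (n : X → ℝ)
    (m₀ : ℝ) (hm₀ : 0 < m₀) (d β : ℝ) (hd : 1 ≤ d) (hβ : 2 ≤ β)
    (p : ℝ → X → ℝ)
    (C₀ κ : ℝ) (hC₀ : 0 < C₀) (hκ1 : κ < xi 1)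
    (hshort : ∀ t : ℝ, 0 < t → ∀ x,
      p t x ≤ C₀ * Real.exp (κ * n x) * Real.exp (-t * xi (n x / t)))
    (C₁ C₂ c₁ c₂ : ℝ) (hC₁ : 0 < C₁) (hC₂ : 0 < C₂) (hc₁ : 0 < c₁) (hc₂ : 0 < c₂)
    (hlong : ∀ x, 1 ≤ n x → ∀ t : ℝ, n x ≤ t →
      C₁ * t ^ (-(d / β)) * Real.exp (-c₁ * (n x ^ β / t) ^ (1 / (β - 1))) ≤ p t x ∧
      p t x ≤ C₂ * t ^ (-(d / β)) * Real.exp (-c₂ * (n x ^ β / t) ^ (1 / (β - 1)))) :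
    (∀ α : ℝ, d / β ≤ α → ∀ x, 1 ≤ n x → rieszKernel m₀ p α x = ⊤) ∧
    (∀ D : Set ℝ, IsCompact D → D ⊆ Set.Ioo 0 (d / β) →
      ∃ c C : ℝ, 0 < c ∧ c ≤ C ∧ ∀ α ∈ D, ∀ x, 1 ≤ n x →
        ENNReal.ofReal (c * n x ^ (α * β - d)) ≤ rieszKernel m₀ p α x ∧
        rieszKernel m₀ p α x ≤ ENNReal.ofReal (C * n x ^ (α * β - d))) := by
  have hβ₀ : 0 < β := by linarith
  have hq : 0 < d / β := by positivity
  have hγ : 0 < 1 / (β - 1) := one_div_pos.2 (by linarith)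
  have hN : ∀ x, 1 ≤ n x → n x ≤ n x ^ β := fun x hx => self_le_rpow_of_one_le hx (by linarith)
  have hb : ∀ x, 1 ≤ n x → 0 < n x ^ β := fun x hx => rpow_pos_of_pos (by linarith) β
  have hscale : ∀ x, 1 ≤ n x → ∀ s, (n x ^ β) ^ (s / β) = n x ^ s := fun x hx s => by
    rw [← rpow_mul (by linarith), mul_div_cancel₀ _ hβ₀.ne']
  have hlower : ∀ x, 1 ≤ n x → ∀ t ∈ Ioi (n x ^ β), C₁ * exp (-c₁) * t ^ (-(d / β)) ≤ p t x :=
    fun x hx t ht => mul_exp_neg_mul_rpow_neg_le_of_subgaussian_le hC₁.le hc₁.le hγ.le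
      (hb x hx).le ht.le (hlong x hx t ((hN x hx).trans ht.le)).1
  refine ⟨fun α hα x hx => rieszKernel_eq_top hm₀ (by positivity) (hb x hx) hq hα (hlower x hx),
    fun D hD hDsub => ?_⟩
  obtain ⟨E, hE₀, hE⟩ := exists_exp_neg_mul_le_mul_rpow_neg d (sub_pos.2 hκ1)
  obtain ⟨A, hA₀, hA⟩ := exists_exp_neg_mul_rpow_le_mul_rpow_neg (1 + d / β) hγ hc₂
  have hshort' : ∀ x, 1 ≤ n x → ∀ t ∈ Ioc 0 (n x), p t x ≤ C₀ * E * (n x ^ β) ^ (-(d / β)) := by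
    intro x hx t ht
    refine (le_mul_exp_neg_of_le_mul_exp_xi hC₀.le ht.1 ht.2 (hshort t ht.1 x)).trans ?_
    rw [← neg_div, hscale x hx, mul_assoc]
    gcongr
    exact hE _ hx
  obtain ⟨c, C, hc, hcC, hcD⟩ := exists_pos_le_and_le_of_isCompact hD
    (l := fun α => m₀ / Gamma α * (C₁ * exp (-c₁) / (d / β - α)))
    (u := fun α => m₀ / Gamma α * (C₀ * E / α + C₂ * A / (1 + α) + C₂ / (d / β - α)))
    (continuousOn_div_Gamma_mul (hDsub.trans Ioo_subset_Ioi_self) (by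
      fun_prop (disch := intro α hα; apply ne_of_gt; linarith [(hDsub hα).2])) m₀)
    (continuousOn_div_Gamma_mul (hDsub.trans Ioo_subset_Ioi_self) (by
      fun_prop (disch := intro α hα; apply ne_of_gt; linarith [(hDsub hα).1, (hDsub hα).2])) m₀)
    fun α hα => mul_pos (div_pos hm₀ (Gamma_pos_of_pos (hDsub hα).1))
      (div_pos (by positivity) (sub_pos.2 (hDsub hα).2))
  refine ⟨c, C, hc, hcC, fun α hα x hx => ?_⟩
  rw [← hscale x hx, sub_div, mul_div_cancel_right₀ _ hβ₀.ne']
  constructor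
  · refine le_trans ?_ (le_rieszKernel hm₀.le (by positivity) (hb x hx) (hDsub hα).1 (hDsub hα).2
      (hlower x hx))
    gcongr
    exact (hcD α hα).1
  · refine (rieszKernel_le (B := C₀ * E) (W := C₂ * A) hm₀.le (by linarith) (hN x hx)
      (hDsub hα).1 (hDsub hα).2 (by positivity) (by positivity) hC₂.le (hshort' x hx)
      (fun t ht => le_mul_rpow_neg_mul_of_le_subgaussian hC₂.le hA (by linarith [ht.1]) ht.2
        (hlong x hx t ht.1.le).2)
      (fun t ht => le_mul_rpow_neg_of_le_subgaussian hC₂.le hc₂.le (hb x hx).le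
        ((hb x hx).le.trans ht.le) (hlong x hx t ((hN x hx).trans ht.le)).2)).trans ?_
    gcongr
    exact (hcD α hα).2

/-- Theorem 4.5, asymptotics of the Riesz kernel. Under the
short time Davies–Gaffney type bound and two-sided long time (sub-)Gaussian
bounds with parameters `d ≥ 1`, `β ≥ 2`, the Riesz kernel `k_α` is infinite for
`α ≥ d/β`, and for every compact `D ⊆ (0, d/β)` there are `0 < c ≤ C` with
`c·|x|^{αβ−d} ≤ k_α(x) ≤ C·|x|^{αβ−d}` for all `α ∈ D` and `|x| ≥ 1`. -/
theorem stmt19 {X : Type*} (n : X → ℝ) (hn : ∀ x, 0 ≤ n x)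
    (m₀ : ℝ) (hm₀ : 0 < m₀) (d β : ℝ) (hd : 1 ≤ d) (hβ : 2 ≤ β)
    (p : ℝ → X → ℝ) (hmeas : ∀ x, Measurable fun t => p t x)
    (hpos : ∀ t : ℝ, 0 < t → ∀ x, 0 ≤ p t x)
    (C₀ κ : ℝ) (hC₀ : 0 < C₀) (hκ0 : 0 ≤ κ) (hκ1 : κ < xi 1)
    (hshort : ∀ t : ℝ, 0 < t → ∀ x,
      p t x ≤ C₀ * Real.exp (κ * n x) * Real.exp (-t * xi (n x / t)))
    (C₁ C₂ c₁ c₂ : ℝ) (hC₁ : 0 < C₁) (hC₂ : 0 < C₂) (hc₁ : 0 < c₁) (hc₂ : 0 < c₂)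
    (hlong : ∀ x, 1 ≤ n x → ∀ t : ℝ, n x ≤ t →
      C₁ * t ^ (-(d / β)) * Real.exp (-c₁ * (n x ^ β / t) ^ (1 / (β - 1))) ≤ p t x ∧
      p t x ≤ C₂ * t ^ (-(d / β)) * Real.exp (-c₂ * (n x ^ β / t) ^ (1 / (β - 1)))) :
    (∀ α : ℝ, d / β ≤ α → ∀ x, 1 ≤ n x → rieszKernel m₀ p α x = ⊤) ∧
    (∀ D : Set ℝ, IsCompact D → D ⊆ Set.Ioo 0 (d / β) →
      ∃ c C : ℝ, 0 < c ∧ c ≤ C ∧ ∀ α ∈ D, ∀ x, 1 ≤ n x →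
        ENNReal.ofReal (c * n x ^ (α * β - d)) ≤ rieszKernel m₀ p α x ∧
        rieszKernel m₀ p α x ≤ ENNReal.ofReal (C * n x ^ (α * β - d))) :=
  stmt19_general n m₀ hm₀ d β hd hβ p C₀ κ hC₀ hκ1 hshort C₁ C₂ c₁ c₂ hC₁ hC₂ hc₁ hc₂ hlong

end HG
end
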